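/- Let A be an m × p real matrix, x ∈ {0,1}^p with k ones, and Y = A(x)·G + N where G is any random vector. If conditionally on each value, Y given X = x is Gaussian with covariance A(x)A(x)ᵀ, then I(X; Y) ≤ (m/2)·log₂(k · max_i ‖A(i)‖²) − (1/2)·min_{x ∈ 𝒳_k^p} log₂ det(A(x)A(x)ᵀ), provided every such A(x)A(x)ᵀ is nonsingular. -/

import Mathlib

open Finset Matrix MeasureTheory

variable {m k p : ℕ}

/-- The support sets of the 0-1 vectors with exactly `k` ones: `𝒳_k^p`. -/
def Supp (p k : ℕ) := {s : Finset (Fin p) // s.card = k}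

instance : Fintype (Supp p k) := by unfold Supp; infer_instance

/-- `A(x)·A(x)ᵀ`, where `A(x)` is the submatrix of the columns indexed by the
support `s` of `x`. -/
noncomputable def Sig (A : Matrix (Fin m) (Fin p) ℝ) (s : Supp p k) :
    Matrix (Fin m) (Fin m) ℝ :=
  Matrix.of fun i j => ∑ l ∈ s.1, A i l * A j l

/-- Density of the centered Gaussian `N(0, A(x)A(x)ᵀ)` on `ℝ^m`. -/
noncomputable def gpdf (A : Matrix (Fin m) (Fin p) ℝ) (s : Supp p k)
    (y : Fin m → ℝ) : ℝ :=
  (Real.sqrt ((2 * Real.pi) ^ m * (Sig A s).det))⁻¹ *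
    Real.exp (-(∑ i, ∑ j, y i * (Sig A s)⁻¹ i j * y j) / 2)

/-- Density of `Y` when `X ~ q` on `𝒳_k^p` and `Y | X = x  ~  N(0, A(x)A(x)ᵀ)`. -/
noncomputable def fmix (A : Matrix (Fin m) (Fin p) ℝ) (q : Supp p k → ℝ)
    (y : Fin m → ℝ) : ℝ :=
  ∑ s : Supp p k, q s * gpdf A s y

/-- `I(X; Y) = h(Y) − h(Y|X)`, with
`h(Y|X) = ∑ₓ q(x) · (1/2) log₂((2πe)^m det(A(x)A(x)ᵀ))`. -/
noncomputable def mutInf (A : Matrix (Fin m) (Fin p) ℝ) (q : Supp p k → ℝ) : ℝ :=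
  (-∫ y : Fin m → ℝ, fmix A q y * Real.logb 2 (fmix A q y)) -
    ∑ s : Supp p k, q s *
      ((1 / 2) * Real.logb 2 ((2 * Real.pi * Real.exp 1) ^ m * (Sig A s).det))

/-!
`I(X; Y) = h(Y) - h(Y | X)`. Given `X = x`, `Y` is `N(0, Σₓ)` with `Σₓ = A(x) A(x)ᵀ`, so
`h(Y | X)` averages `½ log((2πe)ᵐ det Σₓ)` and is at least `(m/2) log(2πe) + ½ minₓ log det Σₓ`.
For `h(Y)`: writing `Σₓ = R Rᵀ` and substituting `y = R u` turns each component into a standard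
Gaussian, and Cauchy–Schwarz gives `E‖Y‖² ≤ m · maxₓ tr Σₓ ≤ m v` with `v = k maxᵢ ‖A(i)‖²`.
Gibbs' inequality against the isotropic Gaussian of variance `v` then gives
`h(Y) ≤ (m/2) log(2πe v)`, and the `log(2πe)` terms cancel.
-/

open Real ProbabilityTheory
open scoped NNReal

lemma integral_gaussianPDFReal_mul_sq (v : ℝ≥0) :
    ∫ x, gaussianPDFReal 0 v x * x ^ 2 = v := by
  rcases eq_or_ne v 0 with rfl | hv
  · simp
  have h := variance_fun_id_gaussianReal (μ := 0) (v := v)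
  rw [variance_eq_integral (X := fun x : ℝ => x) aemeasurable_id', integral_id_gaussianReal,
    integral_gaussianReal_eq_integral_smul hv] at h
  simpa using h

lemma integrable_gaussianPDFReal_mul_sq (v : ℝ≥0) :
    Integrable fun x => gaussianPDFReal 0 v x * x ^ 2 := by
  rcases eq_or_ne v 0 with rfl | hv
  · simp
  have h := (memLp_id_gaussianReal (μ := 0) (v := v) 2).integrable_sq
  rw [gaussianReal_of_var_ne_zero _ hv, gaussianPDF_def,
    integrable_withDensity_iff_integrable_smul' (by fun_prop) (by simp)] at h
  simpa [ENNReal.toReal_ofReal (gaussianPDFReal_nonneg _ _ _)] using h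

section IsotropicGaussian

variable {ι : Type*} [Fintype ι]

noncomputable def gaussianPDFPi (v : ℝ≥0) (y : ι → ℝ) : ℝ := ∏ i, gaussianPDFReal 0 v (y i)

lemma gaussianPDFPi_pos {v : ℝ≥0} (hv : v ≠ 0) (y : ι → ℝ) : 0 < gaussianPDFPi v y :=
  prod_pos fun i _ => gaussianPDFReal_pos 0 v (y i) hv

lemma integrable_gaussianPDFPi (v : ℝ≥0) : Integrable (gaussianPDFPi (ι := ι) v) :=
  Integrable.fintype_prod fun _ => integrable_gaussianPDFReal 0 v

lemma integral_gaussianPDFPi {v : ℝ≥0} (hv : v ≠ 0) : ∫ y, gaussianPDFPi (ι := ι) v y = 1 := by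
  simp [gaussianPDFPi, integral_fintype_prod_volume_eq_pow, integral_gaussianPDFReal_eq_one 0 hv]

lemma log_gaussianPDFPi {v : ℝ≥0} (hv : v ≠ 0) (y : ι → ℝ) :
    log (gaussianPDFPi v y) =
      -(Fintype.card ι / 2 : ℝ) * log (2 * π * v) - (∑ i, y i ^ 2) / (2 * v) := by
  rw [gaussianPDFPi, log_prod fun i _ => (gaussianPDFReal_pos 0 v (y i) hv).ne']
  simp only [gaussianPDFReal, sub_zero]
  rw [sum_congr rfl fun i _ => log_mul (by positivity) (exp_pos _).ne', sum_add_distrib]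
  simp only [log_inv, log_sqrt (by positivity : (0:ℝ) ≤ 2 * π * v), log_exp, sum_const, card_univ,
    nsmul_eq_mul, ← sum_div, sum_neg_distrib]
  ring

lemma gaussianPDFPi_mul_sq [DecidableEq ι] (v : ℝ≥0) (a : ι) (y : ι → ℝ) :
    gaussianPDFPi v y * y a ^ 2 =
      ∏ i, gaussianPDFReal 0 v (y i) * (if i = a then y i ^ 2 else 1) := by
  rw [prod_mul_distrib, prod_ite_eq' univ a, if_pos (mem_univ a), gaussianPDFPi]

lemma integrable_gaussianPDFPi_mul_sq (v : ℝ≥0) (a : ι) :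
    Integrable fun y : ι → ℝ => gaussianPDFPi v y * y a ^ 2 := by
  classical
  simp_rw [gaussianPDFPi_mul_sq]
  refine Integrable.fintype_prod
    (f := fun i x => gaussianPDFReal 0 v x * if i = a then x ^ 2 else 1) fun i => ?_
  split_ifs
  · exact integrable_gaussianPDFReal_mul_sq v
  · simpa using integrable_gaussianPDFReal 0 v

lemma integral_gaussianPDFPi_mul_sq {v : ℝ≥0} (hv : v ≠ 0) (a : ι) :
    ∫ y : ι → ℝ, gaussianPDFPi v y * y a ^ 2 = v := by
  classical
  simp_rw [gaussianPDFPi_mul_sq]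
  rw [integral_fintype_prod_volume_eq_prod
    (fun i x => gaussianPDFReal 0 v x * if i = a then x ^ 2 else 1)]
  have h (i : ι) : ∫ x, gaussianPDFReal 0 v x * (if i = a then x ^ 2 else 1) =
      if i = a then (v : ℝ) else 1 := by
    split_ifs <;> simp [integral_gaussianPDFReal_mul_sq, integral_gaussianPDFReal_eq_one 0 hv]
  simp only [h, prod_ite_eq', mem_univ, if_true]

lemma integrable_gaussianPDFPi_mul_sum_sq (v : ℝ≥0) :
    Integrable fun y : ι → ℝ => gaussianPDFPi v y * ∑ i, y i ^ 2 := by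
  simp_rw [mul_sum]
  exact integrable_finsetSum _ fun a _ => integrable_gaussianPDFPi_mul_sq v a

lemma integral_gaussianPDFPi_mul_sum_sq {v : ℝ≥0} (hv : v ≠ 0) :
    ∫ y : ι → ℝ, gaussianPDFPi v y * ∑ i, y i ^ 2 = Fintype.card ι * v := by
  simp_rw [mul_sum]
  rw [integral_finsetSum _ fun a _ => integrable_gaussianPDFPi_mul_sq v a]
  simp [integral_gaussianPDFPi_mul_sq hv]

lemma gaussianPDFPi_one (u : ι → ℝ) :
    gaussianPDFPi 1 u = (√(2 * π))⁻¹ ^ Fintype.card ι * exp (-(∑ i, u i ^ 2) / 2) := by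
  simp [gaussianPDFPi, gaussianPDFReal, prod_mul_distrib, ← exp_sum, ← sum_div]

end IsotropicGaussian

section LinearChangeOfVariables

variable {ι : Type*} [Fintype ι] [DecidableEq ι] {M : Matrix ι ι ℝ}

lemma measurableEmbedding_mulVec (hM : M.det ≠ 0) : MeasurableEmbedding (M *ᵥ ·) :=
  (LinearMap.isClosedEmbedding_of_injective (f := Matrix.toLin' M)
    (LinearMap.ker_eq_bot.mpr (mulVec_injective_iff_isUnit.mpr
      ((isUnit_iff_isUnit_det M).mpr hM.isUnit)))).measurableEmbedding

lemma map_mulVec_volume (hM : M.det ≠ 0) :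
    Measure.map (M *ᵥ ·) (volume : Measure (ι → ℝ)) = ENNReal.ofReal |M.det|⁻¹ • volume := by
  have h := Real.map_linearMap_volume_pi_eq_smul_volume_pi (f := Matrix.toLin' M)
    (by rwa [LinearMap.det_toLin'])
  rwa [LinearMap.det_toLin', abs_inv] at h

lemma integral_comp_mulVec (hM : M.det ≠ 0) (f : (ι → ℝ) → ℝ) :
    ∫ u, f (M *ᵥ u) = |M.det|⁻¹ * ∫ y, f y := by
  rw [← (measurableEmbedding_mulVec hM).integral_map, map_mulVec_volume hM,
    integral_smul_measure, ENNReal.toReal_ofReal (by positivity), smul_eq_mul]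

lemma integrable_comp_mulVec_iff (hM : M.det ≠ 0) {f : (ι → ℝ) → ℝ} :
    Integrable (fun u => f (M *ᵥ u)) ↔ Integrable f := by
  rw [← Function.comp_def, ← (measurableEmbedding_mulVec hM).integrable_map_iff,
    map_mulVec_volume hM, integrable_smul_measure (by simpa using hM) ENNReal.ofReal_ne_top]

end LinearChangeOfVariables

section MultivariateGaussian

variable {ι κ : Type*} [Fintype ι] [Fintype κ]

lemma sum_sq_mulVec_le (R : Matrix ι κ ℝ) (u : κ → ℝ) :
    ∑ i, (R *ᵥ u) i ^ 2 ≤ (R * Rᵀ).trace * ∑ a, u a ^ 2 :=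
  calc ∑ i, (R *ᵥ u) i ^ 2 ≤ ∑ i, (∑ a, R i a ^ 2) * ∑ a, u a ^ 2 :=
        sum_le_sum fun i _ => sum_mul_sq_le_sq_mul_sq univ (R i) u
    _ = (R * Rᵀ).trace * ∑ a, u a ^ 2 := by simp [trace, mul_apply, sum_mul, sq]

variable [DecidableEq ι]

noncomputable def multivariateGaussianPDF (S : Matrix ι ι ℝ) (y : ι → ℝ) : ℝ :=
  (√((2 * π) ^ Fintype.card ι * S.det))⁻¹ * exp (-(∑ i, ∑ j, y i * S⁻¹ i j * y j) / 2)

lemma Matrix.PosDef.exists_mul_transpose_eq {S : Matrix ι ι ℝ} (hS : S.PosDef) :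
    ∃ R : Matrix ι ι ℝ, R.det ≠ 0 ∧ R * Rᵀ = S := by
  open scoped MatrixOrder in
  obtain ⟨B, hB⟩ := CStarAlgebra.nonneg_iff_eq_star_mul_self.mp hS.posSemidef.nonneg
  have hBt : Bᵀ * Bᵀᵀ = S := by
    rw [transpose_transpose, hB, star_eq_conjTranspose, conjTranspose_eq_transpose_of_trivial]
  refine ⟨Bᵀ, fun h => hS.det_pos.ne' ?_, hBt⟩
  rw [← hBt, det_mul, h, zero_mul]

variable {R : Matrix ι ι ℝ}

lemma quadForm_inv_mul_transpose_mulVec (hR : R.det ≠ 0) (u : ι → ℝ) :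
    ∑ i, ∑ j, (R *ᵥ u) i * (R * Rᵀ)⁻¹ i j * (R *ᵥ u) j = ∑ i, u i ^ 2 := by
  have hRu : IsUnit R.det := hR.isUnit
  have hRt : IsUnit Rᵀ.det := by rwa [det_transpose]
  have key : Rᵀ * (R * Rᵀ)⁻¹ * R = 1 := by
    simp [Matrix.mul_inv_rev, ← Matrix.mul_assoc, mul_nonsing_inv _ hRt, nonsing_inv_mul _ hRu]
  calc ∑ i, ∑ j, (R *ᵥ u) i * (R * Rᵀ)⁻¹ i j * (R *ᵥ u) j
      = (R *ᵥ u) ⬝ᵥ ((R * Rᵀ)⁻¹ *ᵥ (R *ᵥ u)) := by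
        simp [dotProduct, mulVec, mul_sum, mul_assoc]
    _ = u ⬝ᵥ ((Rᵀ * (R * Rᵀ)⁻¹ * R) *ᵥ u) := by
        rw [mulVec_mulVec, ← vecMul_transpose, dotProduct_mulVec, vecMul_vecMul,
          dotProduct_mulVec, Matrix.mul_assoc]
    _ = ∑ i, u i ^ 2 := by simp [key, dotProduct, sq]

lemma multivariateGaussianPDF_mul_transpose_mulVec (hR : R.det ≠ 0) (u : ι → ℝ) :
    multivariateGaussianPDF (R * Rᵀ) (R *ᵥ u) = |R.det|⁻¹ * gaussianPDFPi 1 u := by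
  have hsq : (2 * π) ^ Fintype.card ι * (R * Rᵀ).det =
      (√(2 * π) ^ Fintype.card ι * |R.det|) ^ 2 := by
    rw [mul_pow (√(2 * π) ^ _), ← pow_mul, mul_comm _ 2, pow_mul, sq_sqrt (by positivity),
      sq_abs, det_mul, det_transpose, sq]
  rw [multivariateGaussianPDF, quadForm_inv_mul_transpose_mulVec hR, gaussianPDFPi_one, hsq,
    sqrt_sq (by positivity), mul_inv, inv_pow, neg_div]
  ring

@[fun_prop]
lemma continuous_multivariateGaussianPDF (S : Matrix ι ι ℝ) :
    Continuous (multivariateGaussianPDF S) := by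
  unfold multivariateGaussianPDF
  fun_prop

lemma multivariateGaussianPDF_nonneg (S : Matrix ι ι ℝ) (y : ι → ℝ) :
    0 ≤ multivariateGaussianPDF S y :=
  mul_nonneg (inv_nonneg.mpr (sqrt_nonneg _)) (exp_pos _).le

lemma multivariateGaussianPDF_mul_sum_sq_mulVec_le (hR : R.det ≠ 0) (u : ι → ℝ) :
    multivariateGaussianPDF (R * Rᵀ) (R *ᵥ u) * ∑ i, (R *ᵥ u) i ^ 2 ≤
      |R.det|⁻¹ * (R * Rᵀ).trace * (gaussianPDFPi 1 u * ∑ i, u i ^ 2) := by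
  rw [multivariateGaussianPDF_mul_transpose_mulVec hR]
  have h := mul_le_mul_of_nonneg_left (sum_sq_mulVec_le R u)
    (mul_nonneg (inv_nonneg.mpr (abs_nonneg R.det)) (gaussianPDFPi_pos one_ne_zero u).le)
  linarith

variable {S : Matrix ι ι ℝ}

lemma integrable_multivariateGaussianPDF (hS : S.PosDef) :
    Integrable (multivariateGaussianPDF S) := by
  obtain ⟨R, hR, rfl⟩ := hS.exists_mul_transpose_eq
  rw [← integrable_comp_mulVec_iff hR]
  simp_rw [multivariateGaussianPDF_mul_transpose_mulVec hR]
  exact (integrable_gaussianPDFPi 1).const_mul _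

lemma integral_multivariateGaussianPDF (hS : S.PosDef) :
    ∫ y, multivariateGaussianPDF S y = 1 := by
  obtain ⟨R, hR, rfl⟩ := hS.exists_mul_transpose_eq
  have h := integral_comp_mulVec hR (multivariateGaussianPDF (R * Rᵀ))
  simp_rw [multivariateGaussianPDF_mul_transpose_mulVec hR] at h
  rw [integral_const_mul, integral_gaussianPDFPi one_ne_zero] at h
  exact (mul_left_cancel₀ (by simpa using hR) h).symm

lemma integrable_multivariateGaussianPDF_mul_sum_sq (hS : S.PosDef) :
    Integrable fun y => multivariateGaussianPDF S y * ∑ i, y i ^ 2 := by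
  obtain ⟨R, hR, rfl⟩ := hS.exists_mul_transpose_eq
  rw [← integrable_comp_mulVec_iff hR]
  refine ((integrable_gaussianPDFPi_mul_sum_sq 1).const_mul (|R.det|⁻¹ * (R * Rᵀ).trace)).mono' ?_
    (ae_of_all _ fun u => ?_)
  · exact Continuous.aestronglyMeasurable (by fun_prop)
  · rw [Real.norm_of_nonneg (mul_nonneg (multivariateGaussianPDF_nonneg _ _) (by positivity))]
    exact multivariateGaussianPDF_mul_sum_sq_mulVec_le hR u

lemma integral_multivariateGaussianPDF_mul_sum_sq_le (hS : S.PosDef) :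
    ∫ y, multivariateGaussianPDF S y * ∑ i, y i ^ 2 ≤ Fintype.card ι * S.trace := by
  obtain ⟨R, hR, rfl⟩ := hS.exists_mul_transpose_eq
  refine le_of_mul_le_mul_left ?_ (by simpa using hR : 0 < |R.det|⁻¹)
  rw [← integral_comp_mulVec hR (fun y => multivariateGaussianPDF (R * Rᵀ) y * ∑ i, y i ^ 2)]
  calc ∫ u, multivariateGaussianPDF (R * Rᵀ) (R *ᵥ u) * ∑ i, (R *ᵥ u) i ^ 2
      ≤ ∫ u, |R.det|⁻¹ * (R * Rᵀ).trace * (gaussianPDFPi 1 u * ∑ i, u i ^ 2) :=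
        integral_mono ((integrable_comp_mulVec_iff hR).mpr
          (integrable_multivariateGaussianPDF_mul_sum_sq hS))
          ((integrable_gaussianPDFPi_mul_sum_sq 1).const_mul _)
          (multivariateGaussianPDF_mul_sum_sq_mulVec_le hR)
    _ = |R.det|⁻¹ * (Fintype.card ι * (R * Rᵀ).trace) := by
        rw [integral_const_mul, integral_gaussianPDFPi_mul_sum_sq one_ne_zero]
        push_cast
        ring

end MultivariateGaussian

lemma mul_log_add_sub_le_mul_log {x y : ℝ} (hx : 0 ≤ x) (hy : 0 < y) :
    x * log y + x - y ≤ x * log x := by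
  rcases hx.eq_or_lt with rfl | hx
  · simpa using hy.le
  have h := mul_le_mul_of_nonneg_left (log_le_sub_one_of_pos (div_pos hy hx)) hx.le
  rw [log_div hy.ne' hx.ne', mul_sub, mul_sub, mul_div_cancel₀ _ hx.ne', mul_one] at h
  linarith

lemma integral_mul_log_le_integral_mul_log {α : Type*} [MeasurableSpace α] {μ : Measure α}
    {f g : α → ℝ} (hf : ∀ x, 0 ≤ f x) (hg : ∀ x, 0 < g x) (hfi : Integrable f μ)
    (hgi : Integrable g μ) (hfg : ∫ x, g x ∂μ ≤ ∫ x, f x ∂μ)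
    (hflogf : Integrable (fun x => f x * log (f x)) μ)
    (hflogg : Integrable (fun x => f x * log (g x)) μ) :
    ∫ x, f x * log (g x) ∂μ ≤ ∫ x, f x * log (f x) ∂μ := by
  have hsum : Integrable (fun x => f x * log (g x) + f x) μ := hflogg.add hfi
  have h := integral_mono (f := fun x => f x * log (g x) + f x - g x) (hsum.sub hgi) hflogf
    fun x => mul_log_add_sub_le_mul_log (hf x) (hg x)
  rw [integral_sub hsum hgi, integral_add hflogg hfi] at h
  linarith

section MaxEntropy

variable {ι : Type*} [Fintype ι]

/-- Gibbs' inequality against the isotropic Gaussian of variance `v`, whose differential entropy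
is the right-hand side. -/
lemma neg_integral_mul_log_le_of_integral_mul_sum_sq_le {f : (ι → ℝ) → ℝ} (hf : ∀ y, 0 ≤ f y)
    (hfi : Integrable f) (hf1 : ∫ y, f y = 1)
    (hflogf : Integrable fun y => f y * log (f y))
    (hf2 : Integrable fun y => f y * ∑ i, y i ^ 2) {v : ℝ} (hv : 0 < v)
    (hf2v : ∫ y, f y * ∑ i, y i ^ 2 ≤ Fintype.card ι * v) :
    -∫ y, f y * log (f y) ≤ Fintype.card ι / 2 * log (2 * π * exp 1 * v) := by
  lift v to ℝ≥0 using hv.le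
  have hv0 : v ≠ 0 := by exact_mod_cast hv.ne'
  have hlog (y : ι → ℝ) : f y * log (gaussianPDFPi v y) =
      -(Fintype.card ι / 2 * log (2 * π * v)) * f y - (2 * v : ℝ)⁻¹ * (f y * ∑ i, y i ^ 2) := by
    rw [log_gaussianPDFPi hv0]
    ring
  have hgibbs := integral_mul_log_le_integral_mul_log hf (gaussianPDFPi_pos hv0) hfi
    (integrable_gaussianPDFPi v) (by rw [integral_gaussianPDFPi hv0, hf1]) hflogf
    (by simp_rw [hlog]; exact (hfi.const_mul _).sub (hf2.const_mul _))
  simp_rw [hlog] at hgibbs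
  rw [integral_sub (hfi.const_mul _) (hf2.const_mul _), integral_const_mul, integral_const_mul,
    hf1] at hgibbs
  have h2v : (2 * v : ℝ)⁻¹ * ∫ y, f y * ∑ i, y i ^ 2 ≤ Fintype.card ι / 2 := by
    calc (2 * v : ℝ)⁻¹ * ∫ y, f y * ∑ i, y i ^ 2 ≤ (2 * v : ℝ)⁻¹ * (Fintype.card ι * v) :=
          mul_le_mul_of_nonneg_left hf2v (by positivity)
      _ = Fintype.card ι / 2 := by field_simp
  have hsplit : log (2 * π * exp 1 * v) = log (2 * π * v) + 1 := by
    rw [mul_right_comm, log_mul (by positivity) (exp_pos 1).ne', log_exp]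
  rw [hsplit]
  linarith

end MaxEntropy

lemma iInf_le_sum_mul {σ : Type*} [Fintype σ] {q : σ → ℝ} (hq0 : ∀ s, 0 ≤ q s)
    (hq1 : ∑ s, q s = 1) (a : σ → ℝ) : ⨅ s, a s ≤ ∑ s, q s * a s :=
  calc ⨅ s, a s = ∑ s, q s * ⨅ s, a s := by rw [← sum_mul, hq1, one_mul]
    _ ≤ ∑ s, q s * a s := sum_le_sum fun s _ =>
        mul_le_mul_of_nonneg_left (ciInf_le (Set.finite_range a).bddBelow s) (hq0 s)

section SensingMatrix

variable (A : Matrix (Fin m) (Fin p) ℝ)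

lemma gpdf_eq_multivariateGaussianPDF (s : Supp p k) :
    gpdf A s = multivariateGaussianPDF (Sig A s) := by
  ext y
  simp [gpdf, multivariateGaussianPDF]

lemma Sig_posSemidef (s : Supp p k) : (Sig A s).PosSemidef := by
  let B := A.submatrix id ((↑) : s.1 → Fin p)
  have h : Sig A s = B * Bᵀ := by
    ext i j
    simp [Sig, B, mul_apply, ← Finset.sum_coe_sort s.1]
  simpa [h] using posSemidef_self_mul_conjTranspose B

lemma trace_Sig_le (s : Supp p k) : (Sig A s).trace ≤ k * ⨆ i, ∑ j, A j i ^ 2 :=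
  calc (Sig A s).trace = ∑ l ∈ s.1, ∑ j, A j l ^ 2 := by
        simp only [trace, diag_apply, Sig, of_apply, sq]
        exact sum_comm
    _ ≤ ∑ l ∈ s.1, ⨆ i, ∑ j, A j i ^ 2 :=
        sum_le_sum fun l _ =>
          le_ciSup (f := fun i => ∑ j, A j i ^ 2) (Set.finite_range _).bddAbove l
    _ = k * ⨆ i, ∑ j, A j i ^ 2 := by rw [sum_const, s.2, nsmul_eq_mul]

variable {A} {q : Supp p k → ℝ}

lemma fmix_nonneg (hq0 : ∀ s, 0 ≤ q s) (y : Fin m → ℝ) : 0 ≤ fmix A q y :=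
  sum_nonneg fun s _ => mul_nonneg (hq0 s) (gpdf_eq_multivariateGaussianPDF A s ▸
    multivariateGaussianPDF_nonneg _ y)

lemma integrable_fmix (hS : ∀ s : Supp p k, (Sig A s).PosDef) : Integrable (fmix A q) := by
  unfold fmix
  simp_rw [gpdf_eq_multivariateGaussianPDF]
  exact integrable_finsetSum _ fun s _ => (integrable_multivariateGaussianPDF (hS s)).const_mul _

lemma integral_fmix (hS : ∀ s : Supp p k, (Sig A s).PosDef) (hq1 : ∑ s, q s = 1) :
    ∫ y, fmix A q y = 1 := by
  unfold fmix
  simp_rw [gpdf_eq_multivariateGaussianPDF]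
  rw [integral_finsetSum _ fun s _ => (integrable_multivariateGaussianPDF (hS s)).const_mul _]
  simp [integral_const_mul, integral_multivariateGaussianPDF (hS _), hq1]

lemma fmix_mul_sum_sq (y : Fin m → ℝ) :
    fmix A q y * ∑ i, y i ^ 2 =
      ∑ s, q s * (multivariateGaussianPDF (Sig A s) y * ∑ i, y i ^ 2) := by
  simp only [fmix, gpdf_eq_multivariateGaussianPDF, sum_mul, mul_assoc]

lemma integrable_fmix_mul_sum_sq (hS : ∀ s : Supp p k, (Sig A s).PosDef) :
    Integrable fun y => fmix A q y * ∑ i, y i ^ 2 := by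
  simp_rw [fmix_mul_sum_sq]
  exact integrable_finsetSum _ fun s _ =>
    (integrable_multivariateGaussianPDF_mul_sum_sq (hS s)).const_mul _

lemma integral_fmix_mul_sum_sq_le (hS : ∀ s : Supp p k, (Sig A s).PosDef) (hq0 : ∀ s, 0 ≤ q s)
    (hq1 : ∑ s, q s = 1) {v : ℝ} (hv : ∀ s : Supp p k, (Sig A s).trace ≤ v) :
    ∫ y, fmix A q y * ∑ i, y i ^ 2 ≤ m * v := by
  simp_rw [fmix_mul_sum_sq]
  rw [integral_finsetSum _ fun s _ =>
    (integrable_multivariateGaussianPDF_mul_sum_sq (hS s)).const_mul _]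
  calc ∑ s, ∫ y, q s * (multivariateGaussianPDF (Sig A s) y * ∑ i, y i ^ 2)
      ≤ ∑ s, q s * (m * v) := sum_le_sum fun s _ => by
        rw [integral_const_mul]
        refine mul_le_mul_of_nonneg_left ?_ (hq0 s)
        simpa using (integral_multivariateGaussianPDF_mul_sum_sq_le (hS s)).trans
          (mul_le_mul_of_nonneg_left (hv s) (Nat.cast_nonneg _))
    _ = m * v := by rw [← sum_mul, hq1, one_mul]

lemma neg_integral_fmix_mul_logb_le (hS : ∀ s : Supp p k, (Sig A s).PosDef) (hq0 : ∀ s, 0 ≤ q s)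
    (hq1 : ∑ s, q s = 1) (hint : Integrable fun y => fmix A q y * logb 2 (fmix A q y))
    {v : ℝ} (hv0 : 0 < v) (hv : ∀ s : Supp p k, (Sig A s).trace ≤ v) :
    -∫ y, fmix A q y * logb 2 (fmix A q y) ≤ m / 2 * logb 2 (2 * π * exp 1 * v) := by
  have hlogb (y : Fin m → ℝ) :
      fmix A q y * logb 2 (fmix A q y) = fmix A q y * log (fmix A q y) / log 2 := by
    rw [logb, mul_div_assoc]
  have hlog : Integrable fun y => fmix A q y * log (fmix A q y) := by
    simpa [hlogb, div_mul_cancel₀ _ (log_pos one_lt_two).ne'] using hint.mul_const (log 2)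
  have h := neg_integral_mul_log_le_of_integral_mul_sum_sq_le (fmix_nonneg hq0)
    (integrable_fmix hS) (integral_fmix hS hq1) hlog (integrable_fmix_mul_sum_sq hS) hv0
    (by simpa using integral_fmix_mul_sum_sq_le hS hq0 hq1 hv)
  simp_rw [hlogb]
  rw [integral_div, logb, ← mul_div_assoc, ← neg_div]
  exact div_le_div_of_nonneg_right (by simpa using h) (log_nonneg one_le_two)

lemma sum_mul_half_logb_pow_mul_det (hq1 : ∑ s, q s = 1)
    (hdet : ∀ s : Supp p k, (Sig A s).det ≠ 0) {c : ℝ} (hc : c ≠ 0) :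
    ∑ s, q s * (1 / 2 * logb 2 (c ^ m * (Sig A s).det)) =
      m / 2 * logb 2 c + 1 / 2 * ∑ s, q s * logb 2 (Sig A s).det := by
  have h (s : Supp p k) : q s * (1 / 2 * logb 2 (c ^ m * (Sig A s).det)) =
      m / 2 * logb 2 c * q s + 1 / 2 * (q s * logb 2 (Sig A s).det) := by
    rw [logb_mul (pow_ne_zero m hc) (hdet s), logb_pow]
    ring
  rw [sum_congr rfl fun s _ => h s, sum_add_distrib, ← mul_sum, ← mul_sum, hq1, mul_one]

end SensingMatrix

theorem stmt_9_general (hm : 0 < m)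
    (A : Matrix (Fin m) (Fin p) ℝ)
    (q : Supp p k → ℝ) (hq0 : ∀ s, 0 ≤ q s) (hq1 : ∑ s : Supp p k, q s = 1)
    (hnonsing : ∀ s : Supp p k, (Sig A s).det ≠ 0)
    (hint : Integrable (fun y : Fin m → ℝ => fmix A q y * Real.logb 2 (fmix A q y))) :
    mutInf A q ≤
      ((m : ℝ) / 2) * Real.logb 2 ((k : ℝ) * ⨆ i : Fin p, ∑ j : Fin m, (A j i) ^ 2)
        - (1 / 2) * ⨅ s : Supp p k, Real.logb 2 ((Sig A s).det) := by
  have hS (s : Supp p k) : (Sig A s).PosDef :=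
    (Sig_posSemidef A s).posDef_iff_det_ne_zero.mpr (hnonsing s)
  obtain ⟨s₀⟩ : Nonempty (Supp p k) := by
    by_contra h
    simp [not_nonempty_iff.mp h] at hq1
  have : Nonempty (Fin m) := Fin.pos_iff_nonempty.mp hm
  have hv : 0 < (k : ℝ) * ⨆ i, ∑ j, A j i ^ 2 := (hS s₀).trace_pos.trans_le (trace_Sig_le A s₀)
  have hY := neg_integral_fmix_mul_logb_le hS hq0 hq1 hint hv (trace_Sig_le A)
  have h2πe : 2 * π * exp 1 ≠ 0 := by positivity
  have hYX := sum_mul_half_logb_pow_mul_det hq1 hnonsing h2πe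
  have hmin := iInf_le_sum_mul hq0 hq1 fun s => logb 2 (Sig A s).det
  rw [logb_mul h2πe hv.ne'] at hY
  unfold mutInf
  linarith

theorem stmt_9 (hm : 0 < m) (hmk : m ≤ k) (hkp : k ≤ p)
    (A : Matrix (Fin m) (Fin p) ℝ)
    (q : Supp p k → ℝ) (hq0 : ∀ s, 0 ≤ q s) (hq1 : ∑ s : Supp p k, q s = 1)
    (hnonsing : ∀ s : Supp p k, (Sig A s).det ≠ 0)
    (hint : Integrable (fun y : Fin m → ℝ => fmix A q y * Real.logb 2 (fmix A q y))) :
    mutInf A q ≤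
      ((m : ℝ) / 2) * Real.logb 2 ((k : ℝ) * ⨆ i : Fin p, ∑ j : Fin m, (A j i) ^ 2)
        - (1 / 2) * ⨅ s : Supp p k, Real.logb 2 ((Sig A s).det) :=
  stmt_9_general hm A q hq0 hq1 hnonsing hint
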